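/- For a finite non-empty set of words S, the prefix tree of S, when converted to a regular expression by interpreting branching internal nodes as disjunctions, chains as concatenations, and adding ? at internal nodes whose root-path spells a word of S, yields a regular expression r with L(r) = S. Moreover, since no node of the prefix tree has two outgoing edges with the same label, r is deterministic. -/

import Mathlib

open Computability

/-- Regular expressions (with explicit parentheses) built from ∅, ε, letters,
concatenation, union, optional `?` and one-or-more `⁺`. -/
inductive PRE (α : Type) where
  | empty : PRE α
  | eps : PRE α
  | char : α → PRE α
  | paren : PRE α → PRE α
  | cat : PRE α → PRE α → PRE α
  | alt : PRE α → PRE α → PRE α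
  | opt : PRE α → PRE α
  | pos : PRE α → PRE α

/-- The language of a regular expression. -/
def PRE.lang {α : Type} : PRE α → Language α
  | .empty => 0
  | .eps => 1
  | .char a => {[a]}
  | .paren r => r.lang
  | .cat r s => r.lang * s.lang
  | .alt r s => r.lang + s.lang
  | .opt r => r.lang + 1
  | .pos r => r.lang * (r.lang)∗

/-- Replace the i-th occurrence of each letter `a` by the marked symbol `(a, i)`,
threading occurrence counters. -/
def PRE.markAux {α : Type} [DecidableEq α] : PRE α → (α → ℕ) → PRE (α × ℕ) × (α → ℕ)
  | .empty, c => (.empty, c)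
  | .eps, c => (.eps, c)
  | .char a, c => (.char (a, c a + 1), fun b => if b = a then c a + 1 else c b)
  | .paren r, c => let p := r.markAux c; (.paren p.1, p.2)
  | .cat r s, c => let p := r.markAux c; let q := s.markAux p.2; (.cat p.1 q.1, q.2)
  | .alt r s, c => let p := r.markAux c; let q := s.markAux p.2; (.alt p.1 q.1, q.2)
  | .opt r, c => let p := r.markAux c; (.opt p.1, p.2)
  | .pos r, c => let p := r.markAux c; (.pos p.1, p.2)

/-- The marked version r̄ of a regular expression. -/
def PRE.mark {α : Type} [DecidableEq α] (r : PRE α) : PRE (α × ℕ) :=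
  (r.markAux fun _ => 0).1

/-- A regular expression is deterministic (one-unambiguous) if its marked version
admits no two words w·a⁽ⁱ⁾·v and w·a⁽ʲ⁾·v′ with i ≠ j. -/
def PRE.Deterministic {α : Type} [DecidableEq α] (r : PRE α) : Prop :=
  ∀ (w v v' : List (α × ℕ)) (a : α) (i j : ℕ),
    w ++ (a, i) :: v ∈ r.mark.lang → w ++ (a, j) :: v' ∈ r.mark.lang → i = j

/-- Number of occurrences of the letter `a` in `r`. -/
def PRE.rep {α : Type} [DecidableEq α] : PRE α → α → ℕ
  | .empty, _ => 0
  | .eps, _ => 0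
  | .char b, a => if b = a then 1 else 0
  | .paren r, a => r.rep a
  | .cat r s, a => r.rep a + s.rep a
  | .alt r s, a => r.rep a + s.rep a
  | .opt r, a => r.rep a
  | .pos r, a => r.rep a

/-- `r` is a k-occurrence regular expression: every letter occurs at most `k` times. -/
def PRE.IsKORE {α : Type} [DecidableEq α] (k : ℕ) (r : PRE α) : Prop :=
  ∀ a, r.rep a ≤ k

/-- Length of the string representation (letters, ∅, ε, operators ·, +, ?, ⁺ and
parentheses each count as one character). -/
def PRE.len {α : Type} : PRE α → ℕ
  | .empty => 1
  | .eps => 1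
  | .char _ => 1
  | .paren r => r.len + 2
  | .cat r s => r.len + s.len + 1
  | .alt r s => r.len + s.len + 1
  | .opt r => r.len + 1
  | .pos r => r.len + 1

/-- A prefix tree (trie): each node records whether it is accepting and carries a
list of labeled children. -/
inductive Trie (α : Type) where
  | node : Bool → List (α × Trie α) → Trie α

/-- The word spelled by a root path is in the trie iff the path ends in an
accepting node. -/
def Trie.accepts {α : Type} : Trie α → List α → Prop
  | .node acc _, [] => acc = true
  | .node _ ch, a :: w => ∃ p ∈ ch, p.1 = a ∧ Trie.accepts p.2 w

/-- A node is a leaf if it has no children. -/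
def Trie.isLeaf {α : Type} : Trie α → Bool
  | .node _ ch => ch.isEmpty

/-- Disjunction of a nonempty list of expressions. -/
def listAlt {α : Type} : PRE α → List (PRE α) → PRE α
  | r, [] => r
  | r, s :: rest => .alt r (listAlt s rest)

mutual
  /-- Conversion of a prefix tree to a regular expression: branching nodes become
  disjunctions, chains become concatenations, and accepting internal nodes get `?`. -/
  def Trie.toRE {α : Type} : Trie α → PRE α
    | .node acc ch =>
        match ch with
        | [] => .eps
        | c :: cs =>
            let body := listAlt (Trie.edgeRE c) (Trie.edgeList cs)
            if acc then .opt body else body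

  def Trie.edgeRE {α : Type} : α × Trie α → PRE α
    | (a, t) => if t.isLeaf then .char a else .cat (.char a) (Trie.toRE t)

  def Trie.edgeList {α : Type} : List (α × Trie α) → List (PRE α)
    | [] => []
    | c :: cs => Trie.edgeRE c :: Trie.edgeList cs
end

/-- Well-formedness of a prefix tree: no node has two outgoing edges with the same
label, and every leaf is accepting. -/
inductive Trie.WF {α : Type} : Trie α → Prop
  | mk (acc : Bool) (ch : List (α × Trie α)) :
      (ch.map Prod.fst).Nodup →
      (ch = [] → acc = true) →
      (∀ p ∈ ch, Trie.WF p.2) →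
      Trie.WF (.node acc ch)

/-!
The expression `toRE` is read off node by node: an edge `a → t` contributes `a · L(t)`, the
edges leaving a node are joined by `+`, and `?` adds `ε` at accepting nodes; leaves are
accepting, so a leaf contributes exactly `ε`. Hence `L(toRE T)` is the set of words
accepted by `T`.

For determinism, marking `toRE T` gives `toRE` of the marked trie, in which the edge
labelled `a` becomes `(a, i)`. Two accepted marked words `w·(a,i)·v` and `w·(a,j)·v'` follow
the same path along `w`, and since the edges at a node carry distinct letters they also
take the same `a`-edge, so `i = j`.
-/

variable {α β γ : Type}

namespace Trie

@[induction_eliminator]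
theorem induction {motive : Trie α → Prop}
    (node : ∀ acc ch, (∀ p ∈ ch, motive p.2) → motive (.node acc ch)) (t : Trie α) : motive t :=
  Trie.rec (motive_2 := fun ch => ∀ p ∈ ch, motive p.2) (motive_3 := fun p => motive p.2)
    node (fun _ h => absurd h List.not_mem_nil)
    (fun _ _ hp hps => List.forall_mem_cons.2 ⟨hp, hps⟩) (fun _ _ h => h) t

theorem accepts_node_iff {acc : Bool} {ch : List (α × Trie α)} {w : List α} :
    (node acc ch).accepts w ↔
      (w = [] ∧ acc = true) ∨ ∃ p ∈ ch, ∃ u, w = p.1 :: u ∧ p.2.accepts u := by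
  cases w <;> simp [accepts, eq_comm]

inductive NodupLabelsBy (f : β → γ) : Trie β → Prop
  | mk (acc : Bool) (ch : List (β × Trie β)) :
      (ch.map fun p => f p.1).Nodup →
      (∀ p ∈ ch, NodupLabelsBy f p.2) →
      NodupLabelsBy f (.node acc ch)

theorem NodupLabelsBy.eq_of_accepts {f : β → γ} {t : Trie β} (ht : t.NodupLabelsBy f)
    {w v v' : List β} {b b' : β} (hv : t.accepts (w ++ b :: v)) (hv' : t.accepts (w ++ b' :: v'))
    (hf : f b = f b') : b = b' := by
  induction w generalizing t with
  | nil =>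
    obtain ⟨acc, ch, hnd, -⟩ := ht
    obtain ⟨p, hp, rfl, -⟩ := hv
    obtain ⟨q, hq, rfl, -⟩ := hv'
    rw [List.inj_on_of_nodup_map hnd hp hq hf]
  | cons x w ih =>
    obtain ⟨acc, ch, hnd, hsub⟩ := ht
    obtain ⟨p, hp, hpx, hpw⟩ := hv
    obtain ⟨q, hq, hqx, hqw⟩ := hv'
    obtain rfl := List.inj_on_of_nodup_map hnd hp hq (by rw [hpx, hqx])
    exact ih (hsub p hp) hpw hqw

def altRE : List (α × Trie α) → PRE α
  | [] => .empty
  | e :: es => listAlt (edgeRE e) (edgeList es)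

theorem toRE_node_nil (acc : Bool) : (node acc []).toRE = (.eps : PRE α) := rfl

theorem toRE_node_cons (acc : Bool) (e : α × Trie α) (es : List (α × Trie α)) :
    (node acc (e :: es)).toRE = if acc then .opt (altRE (e :: es)) else altRE (e :: es) := rfl

theorem altRE_cons_cons (e f : α × Trie α) (fs : List (α × Trie α)) :
    altRE (e :: f :: fs) = .alt (edgeRE e) (altRE (f :: fs)) := rfl

theorem mem_lang_altRE {ch : List (α × Trie α)} {w : List α} :
    w ∈ (altRE ch).lang ↔ ∃ p ∈ ch, w ∈ (edgeRE p).lang := by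
  induction ch with
  | nil => simp [altRE, PRE.lang]
  | cons e es ih =>
    cases es with
    | nil => simp [altRE, listAlt, edgeList]
    | cons f fs =>
      rw [altRE_cons_cons, PRE.lang, Language.mem_add, ih]
      exact (List.exists_mem_cons_iff (fun p => w ∈ (edgeRE p).lang) _ _).symm

theorem lang_edgeRE (a : α) (t : Trie α) : (edgeRE (a, t)).lang = {[a]} * t.toRE.lang := by
  rcases t with ⟨acc, _ | ⟨e, es⟩⟩
  · simp [edgeRE, isLeaf, toRE_node_nil, PRE.lang]
  · simp [edgeRE, isLeaf, PRE.lang]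

theorem mem_lang_toRE {t : Trie α} (ht : t.WF) (w : List α) : w ∈ t.toRE.lang ↔ t.accepts w := by
  induction ht generalizing w with
  | mk acc ch _ hleaf _ ih =>
    have hedges : (∃ p ∈ ch, w ∈ (edgeRE p).lang) ↔
        ∃ p ∈ ch, ∃ u, w = p.1 :: u ∧ p.2.accepts u := by
      refine exists_congr fun p => and_congr_right fun hp => ?_
      obtain ⟨a, t⟩ := p
      rw [lang_edgeRE, Language.mem_mul]
      constructor
      · rintro ⟨_, rfl, u, hu, rfl⟩
        exact ⟨u, rfl, (ih _ hp u).1 hu⟩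
      · rintro ⟨u, rfl, hu⟩
        exact ⟨[a], rfl, u, (ih _ hp u).2 hu, rfl⟩
    rw [accepts_node_iff]
    rcases ch with _ | ⟨e, es⟩
    · simp [toRE_node_nil, PRE.lang, Language.mem_one, hleaf rfl]
    · rw [toRE_node_cons]
      cases acc
      · rw [if_neg Bool.false_ne_true, mem_lang_altRE, hedges]
        simp
      · rw [if_pos rfl, PRE.lang, Language.mem_add, Language.mem_one, mem_lang_altRE, hedges]
        simp [or_comm]

section Mark

variable [DecidableEq α]

/- Visits the edges in the same order as `PRE.markAux` visits the letters of `toRE`,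
so both thread the same occurrence counters. -/
mutual
  def markAux : Trie α → (α → ℕ) → Trie (α × ℕ) × (α → ℕ)
    | .node acc ch, c =>
        let p := markEdges ch c
        (.node acc p.1, p.2)

  def markEdges :
      List (α × Trie α) → (α → ℕ) → List ((α × ℕ) × Trie (α × ℕ)) × (α → ℕ)
    | [], c => ([], c)
    | (a, t) :: cs, c =>
        let p := markAux t fun b => if b = a then c a + 1 else c b
        let q := markEdges cs p.2
        (((a, c a + 1), p.1) :: q.1, q.2)
end

theorem markEdges_map_fst (ch : List (α × Trie α)) (c : α → ℕ) :
    (markEdges ch c).1.map (fun p => p.1.1) = ch.map Prod.fst := by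
  induction ch generalizing c with
  | nil => rfl
  | cons e es ih => simp [markEdges, ih]

theorem forall_mem_markEdges {P : Trie (α × ℕ) → Prop} {ch : List (α × Trie α)}
    (h : ∀ p ∈ ch, ∀ c, P (p.2.markAux c).1) (c : α → ℕ) :
    ∀ q ∈ (markEdges ch c).1, P q.2 := by
  induction ch generalizing c with
  | nil => simp [markEdges]
  | cons e es ih =>
    obtain ⟨a, t⟩ := e
    simp only [markEdges, List.mem_cons, forall_eq_or_imp]
    exact ⟨h _ List.mem_cons_self _, ih (fun p hp => h p (List.mem_cons_of_mem _ hp)) _⟩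

theorem wf_markAux {t : Trie α} (ht : t.WF) (c : α → ℕ) : (t.markAux c).1.WF := by
  induction ht generalizing c with
  | mk acc ch hnd hleaf _ ih =>
    have hmap := markEdges_map_fst ch c
    refine .mk _ _ ?_ (fun h => hleaf ?_) (forall_mem_markEdges ih c)
    · refine .of_map Prod.fst ?_
      rwa [List.map_map, Function.comp_def, hmap]
    · simpa [h] using hmap.symm

theorem nodupLabelsBy_markAux {t : Trie α} (ht : t.WF) (c : α → ℕ) :
    (t.markAux c).1.NodupLabelsBy Prod.fst := by
  induction ht generalizing c with
  | mk acc ch hnd _ _ ih =>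
    exact .mk _ _ (by rwa [markEdges_map_fst]) (forall_mem_markEdges ih c)

theorem markAux_edgeRE (a : α) (t : Trie α) (c : α → ℕ)
    (ih : ∀ c, t.toRE.markAux c = ((t.markAux c).1.toRE, (t.markAux c).2)) :
    (edgeRE (a, t)).markAux c =
      let p := markAux t fun b => if b = a then c a + 1 else c b
      (edgeRE ((a, c a + 1), p.1), p.2) := by
  rcases t with ⟨acc, _ | ⟨e, es⟩⟩
  · rfl
  · obtain ⟨b, s⟩ := e
    simp [edgeRE, isLeaf, PRE.markAux, ih, markAux, markEdges]

theorem markAux_altRE (ch : List (α × Trie α)) (c : α → ℕ)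
    (ih : ∀ p ∈ ch, ∀ c, p.2.toRE.markAux c = ((p.2.markAux c).1.toRE, (p.2.markAux c).2)) :
    (altRE ch).markAux c = (altRE (markEdges ch c).1, (markEdges ch c).2) := by
  induction ch generalizing c with
  | nil => rfl
  | cons e es ihes =>
    obtain ⟨a, t⟩ := e
    have het := markAux_edgeRE a t c (ih _ List.mem_cons_self)
    cases es with
    | nil => exact het
    | cons f fs =>
      rw [altRE_cons_cons]
      simp only [PRE.markAux]
      rw [het, ihes _ fun p hp => ih p (List.mem_cons_of_mem _ hp)]
      rfl

theorem markAux_toRE (t : Trie α) (c : α → ℕ) :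
    t.toRE.markAux c = ((t.markAux c).1.toRE, (t.markAux c).2) := by
  induction t generalizing c with
  | node acc ch ih =>
    rcases ch with _ | ⟨⟨a, t⟩, es⟩
    · rfl
    · have halt := markAux_altRE _ c ih
      obtain ⟨e', es', c', hcons⟩ :
          ∃ e' es' c', markEdges ((a, t) :: es) c = (e' :: es', c') := ⟨_, _, _, rfl⟩
      rw [hcons] at halt
      simp only [markAux, hcons, toRE_node_cons]
      cases acc
      · exact halt
      · simp only [if_true, PRE.markAux, halt]

theorem mark_toRE (t : Trie α) : t.toRE.mark = (markAux t fun _ => 0).1.toRE := by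
  rw [PRE.mark, markAux_toRE]

theorem toRE_deterministic {t : Trie α} (ht : t.WF) : t.toRE.Deterministic := by
  intro w v v' a i j hi hj
  have hM := wf_markAux ht fun _ => 0
  rw [mark_toRE, mem_lang_toRE hM] at hi hj
  exact congrArg Prod.snd ((nodupLabelsBy_markAux ht _).eq_of_accepts hi hj rfl)

end Mark

end Trie

/-- Converting the prefix tree of a finite non-empty set of words S to a regular
expression yields an expression r with L(r) = S; moreover r is deterministic. -/
theorem stmt11 {α : Type} [DecidableEq α] (S : Set (List α))
    (hne : S.Nonempty) (hfin : S.Finite)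
    (T : Trie α) (hWF : T.WF) (hT : ∀ w : List α, T.accepts w ↔ w ∈ S) :
    (∀ w : List α, w ∈ T.toRE.lang ↔ w ∈ S) ∧ T.toRE.Deterministic :=
  ⟨fun w => (T.mem_lang_toRE hWF w).trans (hT w), T.toRE_deterministic hWF⟩
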